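/- Let L, σ², B, ε, τ, h > 0 and n ≥ 1. Define T_Local = min{ √(τ h L σ² B⁴/ε³) + h(L B²/ε + σ² B²/(n ε²)), h(L B²/ε + σ² B²/ε²) } and T_MB = min{ τ L B²/ε + h(L B²/ε + σ² B²/(n ε²)), h(L B²/ε + σ² B²/ε²) }. Then T_Local ≥ (1/2) · T_MB (in fact T_Local ≥ T_MB up to constant factor; prove T_Local ≥ c · T_MB for c = 1/2). -/

import Mathlib

/-!
With `a = τLB²/ε` and `b = hσ²B²/ε²` the square-root term of Local SGD is `√(ab) ≥ min a b`.
If `a ≤ b` this recovers the first term of Minibatch SGD; otherwise `b` plus the common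
`h(LB²/ε + …)` term already exceeds the second term `h(LB²/ε + σ²B²/ε²)`. Hence
`T_Local ≥ T_MB ≥ T_MB / 2`.
-/

theorem Real.min_le_sqrt_mul (a b : ℝ) : min a b ≤ √(a * b) := by
  rcases le_or_gt (min a b) 0 with hmin | hmin
  · exact hmin.trans (Real.sqrt_nonneg _)
  · have ha : 0 < a := hmin.trans_le (min_le_left a b)
    have hb : 0 < b := hmin.trans_le (min_le_right a b)
    rw [Real.le_sqrt hmin.le (mul_pos ha hb).le, sq]
    exact mul_le_mul (min_le_left a b) (min_le_right a b) hmin.le ha.le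

theorem min_add_le_min_sqrt_mul_add {a b c d : ℝ} (hd : d ≤ b + c) :
    min (a + c) d ≤ min (√(a * b) + c) d := by
  refine le_min ?_ (min_le_right _ _)
  calc min (a + c) d ≤ min (a + c) (b + c) := min_le_min_left _ hd
    _ = min a b + c := min_add_add_right a b c
    _ ≤ √(a * b) + c := add_le_add_left (Real.min_le_sqrt_mul a b) c

theorem local_sgd_time_ge_minibatch_time_general (L σ2 B ε τ h : ℝ) (n : ℕ)
    (hL : 0 < L) (hσ2 : 0 < σ2) (hε : 0 < ε) (hτ : 0 < τ) (hh : 0 < h) :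
    let T_Local := min (Real.sqrt (τ * h * L * σ2 * B ^ 4 / ε ^ 3)
        + h * (L * B ^ 2 / ε + σ2 * B ^ 2 / (n * ε ^ 2)))
      (h * (L * B ^ 2 / ε + σ2 * B ^ 2 / ε ^ 2))
    let T_MB := min (τ * L * B ^ 2 / ε + h * (L * B ^ 2 / ε + σ2 * B ^ 2 / (n * ε ^ 2)))
      (h * (L * B ^ 2 / ε + σ2 * B ^ 2 / ε ^ 2))
    T_Local ≥ (1 / 2) * T_MB := by
  intro T_Local T_MB
  have hprod :
      τ * h * L * σ2 * B ^ 4 / ε ^ 3 = (τ * L * B ^ 2 / ε) * (h * σ2 * B ^ 2 / ε ^ 2) := by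
    ring
  have hD : h * (L * B ^ 2 / ε + σ2 * B ^ 2 / ε ^ 2)
      ≤ h * σ2 * B ^ 2 / ε ^ 2 + h * (L * B ^ 2 / ε + σ2 * B ^ 2 / (n * ε ^ 2)) := by
    have hgap : h * σ2 * B ^ 2 / ε ^ 2 + h * (L * B ^ 2 / ε + σ2 * B ^ 2 / (n * ε ^ 2))
        - h * (L * B ^ 2 / ε + σ2 * B ^ 2 / ε ^ 2) = h * (σ2 * B ^ 2 / (n * ε ^ 2)) := by
      ring
    have hgap_nonneg : 0 ≤ h * (σ2 * B ^ 2 / (n * ε ^ 2)) := by positivity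
    linarith
  have hMB_le_Local : T_MB ≤ T_Local := by
    simp only [T_MB, T_Local, hprod]
    exact min_add_le_min_sqrt_mul_add hD
  have hMB_nonneg : 0 ≤ T_MB := by positivity
  linarith

theorem local_sgd_time_ge_minibatch_time (L σ2 B ε τ h : ℝ) (n : ℕ)
    (hL : 0 < L) (hσ2 : 0 < σ2) (hB : 0 < B) (hε : 0 < ε) (hτ : 0 < τ) (hh : 0 < h)
    (hn : 1 ≤ n) :
    let T_Local := min (Real.sqrt (τ * h * L * σ2 * B ^ 4 / ε ^ 3)
        + h * (L * B ^ 2 / ε + σ2 * B ^ 2 / (n * ε ^ 2)))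
      (h * (L * B ^ 2 / ε + σ2 * B ^ 2 / ε ^ 2))
    let T_MB := min (τ * L * B ^ 2 / ε + h * (L * B ^ 2 / ε + σ2 * B ^ 2 / (n * ε ^ 2)))
      (h * (L * B ^ 2 / ε + σ2 * B ^ 2 / ε ^ 2))
    T_Local ≥ (1 / 2) * T_MB :=
  local_sgd_time_ge_minibatch_time_general L σ2 B ε τ h n hL hσ2 hε hτ hh
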